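/- arXiv:math/0611664 — 4 statements merged into one kernel-verified Lean document; each statement's English description precedes it below -/
import Mathlib

section
/- Let s > 0 and let X_s* := max{X₁, …, X_{N(s)}} (the maximum of an empty set being 0). Then for every c ≥ 0, E[(X_s* − c)⁺] ≤ s·E[(X − c)⁺]; moreover the inequality is strict if P(X > c) > 0. -/
/-!
Write `Y k = X k · 1(S k ≤ s)`. Since `c ≥ 0`, `(max_k Y k - c)⁺ ≤ ∑ k (Y k - c)⁺`, and when two
terms of the sum are positive the bound improves by the smaller of them. As `X k` is independent of
`S k`, `E (Y k - c)⁺ = E (X - c)⁺ · P(S k ≤ s)`, and `∑ k P(S k ≤ s) = E N(s) = s` because `S k`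
has the Erlang density `e^{-x} x^k / k!`, whose sum over `k` is `1` on `[0, ∞)`. Strictness comes
from the event `{X 0 > c, X 1 > c, T 0 ≤ s/2, T 1 ≤ s/2}`, of positive probability by independence.
-/

open MeasureTheory ProbabilityTheory Real Set

noncomputable section

namespace ProphetPoisson

variable {Ω : Type*} [MeasurableSpace Ω]

/-- `arrival T k` is the arrival time `S_{k+1} = T₀ + ⋯ + T_k` of the `k`-th observation
(observations are indexed by `k = 0, 1, 2, …`). -/
def arrival (T : ℕ → Ω → ℝ) (k : ℕ) (ω : Ω) : ℝ :=
  ∑ i ∈ Finset.range (k + 1), T i ω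

/-- The maximum of all observations `X k` arriving by time `t`
(the maximum of an empty set being `0`); for nonnegative observations this is
`⨆ k, X k · 1(S k ≤ t)`. -/
def maxByT (X T : ℕ → Ω → ℝ) (t : ℝ) (ω : Ω) : ℝ :=
  ⨆ k : ℕ, if arrival T k ω ≤ t then X k ω else 0

/-- `M(t)`: the expected maximum of the observations arriving by time `t`. -/
def Mval (μ : Measure Ω) (X T : ℕ → Ω → ℝ) (t : ℝ) : ℝ :=
  ∫ ω, maxByT X T t ω ∂μ

/-- The σ-algebra generated by `(X 0, S 0), …, (X i, S i)`. -/
def obsFiltration (X T : ℕ → Ω → ℝ) (i : ℕ) : MeasurableSpace Ω :=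
  ⨆ j ∈ Finset.range (i + 1),
    MeasurableSpace.comap (fun ω => (X j ω, arrival T j ω)) inferInstance

/-- A stopping rule: an `ℕ`-valued random variable `τ` such that `{τ = i}` is
measurable w.r.t. the σ-algebra generated by `(X 0, S 0), …, (X i, S i)`. -/
def IsStopRule (X T : ℕ → Ω → ℝ) (τ : Ω → ℕ) : Prop :=
  ∀ i : ℕ, MeasurableSet[obsFiltration X T i] {ω | τ ω = i}

/-- The reward `X_τ · 1(S_τ ≤ t)` of a stopping rule `τ`. -/
def stopReward (X T : ℕ → Ω → ℝ) (t : ℝ) (τ : Ω → ℕ) (ω : Ω) : ℝ :=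
  if arrival T (τ ω) ω ≤ t then X (τ ω) ω else 0

/-- `V(t)`: the optimal stopping value `sup_τ E[X_τ 1(S_τ ≤ t)]`. -/
def Vval (μ : Measure Ω) (X T : ℕ → Ω → ℝ) (t : ℝ) : ℝ :=
  sSup {v | ∃ τ : Ω → ℕ, IsStopRule X T τ ∧ v = ∫ ω, stopReward X T t τ ω ∂μ}

/-- The threshold rule `τ(c) = inf {n : X n ≥ c}`. -/
def tauC (X : ℕ → Ω → ℝ) (c : ℝ) (ω : Ω) : ℕ := sInf {n : ℕ | c ≤ X n ω}

/-- `W_c(t)`: the expected reward of the threshold rule `τ(c)`. -/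
def Wval (μ : Measure Ω) (X T : ℕ → Ω → ℝ) (c t : ℝ) : ℝ :=
  ∫ ω, stopReward X T t (tauC X c) ω ∂μ

/-- `sup_{c ≥ 0} W_c(t)`. -/
def supW (μ : Measure Ω) (X T : ℕ → Ω → ℝ) (t : ℝ) : ℝ :=
  sSup {w | ∃ c : ℝ, 0 ≤ c ∧ w = Wval μ X T c t}

/-- The basic probabilistic setup: `μ` is a probability measure; the `X k` are i.i.d.;
the `T k` are i.i.d. exponential with rate `1`; and all of the `X k, T k` are jointly
independent (in particular the sequence `{X k}` is independent of the arrival process). -/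
structure Setup (μ : Measure Ω) (X T : ℕ → Ω → ℝ) : Prop where
  prob : IsProbabilityMeasure μ
  measX : ∀ i, Measurable (X i)
  measT : ∀ i, Measurable (T i)
  indep : iIndepFun (Sum.elim X T) μ
  identX : ∀ i, μ.map (X i) = μ.map (X 0)
  expT : ∀ i, μ.map (T i) = expMeasure 1

end ProphetPoisson


open scoped ENNReal Nat

namespace ProphetPoisson

noncomputable def erlangPDF (k : ℕ) (x : ℝ) : ℝ≥0∞ :=
  ENNReal.ofReal (if 0 ≤ x then exp (-x) * x ^ k / k ! else 0)

lemma erlangPDF_of_neg {k : ℕ} {x : ℝ} (hx : x < 0) : erlangPDF k x = 0 := by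
  simp [erlangPDF, hx.not_ge]

@[fun_prop]
lemma measurable_erlangPDF (k : ℕ) : Measurable (erlangPDF k) :=
  ENNReal.measurable_ofReal.comp (Measurable.ite measurableSet_Ici (by fun_prop) measurable_const)

lemma erlangPDF_zero : erlangPDF 0 = exponentialPDF 1 := by
  ext x
  simp [erlangPDF, exponentialPDF_eq]

lemma erlangPDF_lconvolution_exponentialPDF (k : ℕ) :
    erlangPDF k ⋆ₗ exponentialPDF 1 = erlangPDF (k + 1) := by
  ext y
  have hpt : ∀ x, erlangPDF k x * exponentialPDF 1 (-x + y) =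
      (Icc 0 y).indicator (fun x => ENNReal.ofReal (exp (-y) / k ! * x ^ k)) x := by
    intro x
    rcases lt_or_ge x 0 with hx | hx
    · simp [erlangPDF_of_neg hx, indicator_of_notMem (fun h : x ∈ Icc 0 y => hx.not_ge h.1)]
    rcases lt_or_ge y x with hxy | hxy
    · simp [exponentialPDF_of_neg (by linarith : -x + y < 0),
        indicator_of_notMem (fun h : x ∈ Icc 0 y => hxy.not_ge h.2)]
    rw [indicator_of_mem (show x ∈ Icc 0 y from ⟨hx, hxy⟩), erlangPDF, exponentialPDF_eq, if_pos hx,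
      if_pos (by linarith), ← ENNReal.ofReal_mul (by positivity)]
    congr 1
    rw [show exp (-y) = exp (-x) * exp (-(1 * (-x + y))) by rw [← exp_add]; ring_nf]
    ring
  rw [lconvolution_def, lintegral_congr hpt, lintegral_indicator measurableSet_Icc]
  rcases lt_or_ge y 0 with hy | hy
  · simp [erlangPDF_of_neg hy, Icc_eq_empty_of_lt hy]
  have hint : IntegrableOn (fun x : ℝ => exp (-y) / k ! * x ^ k) (Icc 0 y) :=
    (continuous_const.mul (continuous_pow k)).integrableOn_Icc
  rw [← ofReal_integral_eq_lintegral_ofReal hint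
      (ae_restrict_of_forall_mem measurableSet_Icc fun x hx => by have := hx.1; positivity),
    integral_Icc_eq_integral_Ioc, ← intervalIntegral.integral_of_le hy,
    intervalIntegral.integral_const_mul, integral_pow, erlangPDF, if_pos hy, Nat.factorial_succ]
  congr 1
  push_cast
  field_simp
  ring

lemma tsum_erlangPDF (x : ℝ) : ∑' k, erlangPDF k x = (Ici 0).indicator 1 x := by
  rcases lt_or_ge x 0 with hx | hx
  · simp [erlangPDF_of_neg hx, hx.not_ge]
  have hsum : HasSum (fun k : ℕ => exp (-x) * x ^ k / k !) 1 :=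
    hasSum_one_poissonMeasure ⟨x, hx⟩
  simp only [erlangPDF, if_pos hx]
  rw [← ENNReal.ofReal_tsum_of_nonneg (fun k => by positivity) hsum.summable, hsum.tsum_eq]
  simp [hx]

variable {Ω : Type*}

lemma arrival_eq_sum (T : ℕ → Ω → ℝ) (k : ℕ) :
    arrival T k = ∑ i ∈ Finset.range (k + 1), T i := by
  ext ω
  simp [arrival]

def observedBy (X T : ℕ → Ω → ℝ) (t : ℝ) (k : ℕ) (ω : Ω) : ℝ :=
  if arrival T k ω ≤ t then X k ω else 0

-- `ENNReal.ofReal (x - c)` encodes `(x - c)⁺`.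
lemma ofReal_iSup_sub_add_min_le_tsum {y : ℕ → ℝ} {c : ℝ} (hc : 0 ≤ c) {i j : ℕ} (hij : i ≠ j) :
    ENNReal.ofReal ((⨆ k, y k) - c) + min (ENNReal.ofReal (y i - c)) (ENNReal.ofReal (y j - c))
      ≤ ∑' k, ENNReal.ofReal (y k - c) := by
  set a : ℕ → ℝ≥0∞ := fun k => ENNReal.ofReal (y k - c)
  have hterm : ∀ k, a k + min (a i) (a j) ≤ ∑' k, a k := by
    intro k
    obtain ⟨l, hkl, hl⟩ : ∃ l, k ≠ l ∧ min (a i) (a j) ≤ a l := by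
      rcases eq_or_ne k i with rfl | hki
      · exact ⟨j, hij, min_le_right _ _⟩
      · exact ⟨i, hki, min_le_left _ _⟩
    calc a k + min (a i) (a j) ≤ a k + a l := by gcongr
      _ = ∑ m ∈ {k, l}, a m := (Finset.sum_pair hkl).symm
      _ ≤ ∑' m, a m := ENNReal.sum_le_tsum _
  by_cases hbdd : BddAbove (range y)
  · have hmono : Monotone fun x => ENNReal.ofReal (x - c) := fun x x' hx =>
      ENNReal.ofReal_le_ofReal (by linarith)
    have hcont : Continuous fun x => ENNReal.ofReal (x - c) :=
      ENNReal.continuous_ofReal.comp (continuous_sub_right c)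
    rw [hmono.map_ciSup_of_continuousAt hcont.continuousAt hbdd, ENNReal.iSup_add]
    exact iSup_le hterm
  · -- an unbounded real `⨆` is `0`, whose excess over `c ≥ 0` vanishes
    rw [Real.iSup_of_not_bddAbove hbdd, zero_sub, ENNReal.ofReal_of_nonpos (by linarith), zero_add]
    exact (min_le_left _ _).trans (ENNReal.le_tsum i)

variable [MeasurableSpace Ω]

lemma integral_max_sub_zero_eq_toReal {μ : Measure Ω} {f : Ω → ℝ} (hf : AEMeasurable f μ)
    (c : ℝ) : ∫ ω, max (f ω - c) 0 ∂μ = (∫⁻ ω, ENNReal.ofReal (f ω - c) ∂μ).toReal := by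
  rw [integral_eq_lintegral_of_nonneg_ae (f := fun ω => max (f ω - c) 0)
    (ae_of_all _ fun _ => le_max_right _ _)
    ((hf.sub_const c).max aemeasurable_const).aestronglyMeasurable]
  simp [ENNReal.ofReal_max]

lemma expMeasure_Iic_ne_zero {r t : ℝ} (hr : 0 < r) (ht : 0 < t) : expMeasure r (Iic t) ≠ 0 := by
  rw [show expMeasure r = volume.withDensity (exponentialPDF r) from rfl,
    withDensity_apply _ measurableSet_Iic, lintegral_exponentialPDF_eq_antiDeriv hr, if_pos ht.le,
    Ne, ENNReal.ofReal_eq_zero, not_le, sub_pos, exp_lt_one_iff, neg_lt_zero]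
  positivity

lemma iIndepFun.measure_biInter_preimage_ne_zero {μ : Measure Ω} {ι : Type*} {β : ι → Type*}
    {m : ∀ i, MeasurableSpace (β i)} {f : ∀ i, Ω → β i} (h : iIndepFun f μ) (S : Finset ι)
    {sets : ∀ i, Set (β i)} (hmeas : ∀ i ∈ S, MeasurableSet (sets i))
    (hne : ∀ i ∈ S, μ (f i ⁻¹' sets i) ≠ 0) : μ (⋂ i ∈ S, f i ⁻¹' sets i) ≠ 0 := by
  rw [h.measure_inter_preimage_eq_mul S hmeas]
  exact Finset.prod_ne_zero_iff.mpr hne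

@[fun_prop]
lemma measurable_arrival {T : ℕ → Ω → ℝ} (hT : ∀ i, Measurable (T i)) (k : ℕ) :
    Measurable (arrival T k) :=
  Finset.measurable_sum _ fun i _ => hT i

lemma measurable_observedBy {X T : ℕ → Ω → ℝ} (hX : ∀ i, Measurable (X i))
    (hT : ∀ i, Measurable (T i)) (t : ℝ) (k : ℕ) : Measurable (observedBy X T t k) :=
  Measurable.ite (measurable_arrival hT k measurableSet_Iic) (hX k) measurable_const

lemma measurable_maxByT {X T : ℕ → Ω → ℝ} (hX : ∀ i, Measurable (X i))
    (hT : ∀ i, Measurable (T i)) (t : ℝ) : Measurable (maxByT X T t) :=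
  Measurable.iSup (measurable_observedBy hX hT t)

section ExponentialArrivals

variable {μ : Measure Ω} [IsProbabilityMeasure μ] {T : ℕ → Ω → ℝ}

lemma map_arrival (hindep : iIndepFun T μ) (hT : ∀ i, Measurable (T i))
    (hexp : ∀ i, μ.map (T i) = expMeasure 1) (k : ℕ) :
    μ.map (arrival T k) = volume.withDensity (erlangPDF k) := by
  induction k with
  | zero =>
    rw [arrival_eq_sum, Finset.sum_range_one, hexp, erlangPDF_zero]
    rfl
  | succ k ih =>
    have hsplit : arrival T (k + 1) = arrival T k + T (k + 1) := by
      rw [arrival_eq_sum, arrival_eq_sum, Finset.sum_range_succ]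
    have hind : IndepFun (arrival T k) (T (k + 1)) μ := by
      rw [arrival_eq_sum]
      exact hindep.indepFun_finsetSum_of_notMem hT (by simp)
    rw [hsplit, hind.map_add_eq_map_conv_map (measurable_arrival hT k) (hT _), ih, hexp,
      show expMeasure 1 = volume.withDensity (exponentialPDF 1) from rfl,
      conv_withDensity_eq_lconvolution (g := exponentialPDF 1) (measurable_erlangPDF k)
        (measurable_exponentialPDFReal 1).ennreal_ofReal,
      erlangPDF_lconvolution_exponentialPDF]

lemma tsum_measure_arrival_le (hindep : iIndepFun T μ) (hT : ∀ i, Measurable (T i))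
    (hexp : ∀ i, μ.map (T i) = expMeasure 1) (s : ℝ) :
    ∑' k, μ {ω | arrival T k ω ≤ s} = ENNReal.ofReal s := by
  have hk : ∀ k, μ {ω | arrival T k ω ≤ s} = ∫⁻ x in Iic s, erlangPDF k x := fun k => by
    rw [← withDensity_apply _ measurableSet_Iic, ← map_arrival hindep hT hexp k,
      Measure.map_apply (measurable_arrival hT k) measurableSet_Iic]
    rfl
  simp_rw [hk]
  rw [← lintegral_tsum fun k => (measurable_erlangPDF k).aemeasurable]
  simp_rw [tsum_erlangPDF]
  rw [lintegral_indicator_one measurableSet_Ici, Measure.restrict_apply measurableSet_Ici,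
    Ici_inter_Iic, Real.volume_Icc, sub_zero]

end ExponentialArrivals

namespace Setup

variable {μ : Measure Ω} {X T : ℕ → Ω → ℝ}

lemma measurable_elim (h : Setup μ X T) : ∀ i, Measurable (Sum.elim X T i)
  | Sum.inl i => h.measX i
  | Sum.inr i => h.measT i

lemma iIndepFun_T (h : Setup μ X T) : iIndepFun T μ :=
  h.indep.precomp (f := Sum.elim X T) Sum.inr_injective

lemma indepFun_X_arrival (h : Setup μ X T) (k : ℕ) : IndepFun (X k) (arrival T k) μ := by
  have hind := h.indep.indepFun_finsetSum_of_notMem h.measurable_elim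
    (s := (Finset.range (k + 1)).map ⟨Sum.inr, Sum.inr_injective⟩) (i := Sum.inl k) (by simp)
  rw [Finset.sum_map] at hind
  rw [arrival_eq_sum]
  exact hind.symm

lemma lintegral_ofReal_observedBy_sub (h : Setup μ X T) {c : ℝ} (hc : 0 ≤ c) (s : ℝ) (k : ℕ) :
    ∫⁻ ω, ENNReal.ofReal (observedBy X T s k ω - c) ∂μ
      = (∫⁻ ω, ENNReal.ofReal (X 0 ω - c) ∂μ) * μ {ω | arrival T k ω ≤ s} := by
  set excess : ℝ → ℝ≥0∞ := fun x => ENNReal.ofReal (x - c)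
  have hexcess : Measurable excess := by fun_prop
  have hindicator : Measurable ((Iic s).indicator (1 : ℝ → ℝ≥0∞)) :=
    measurable_one.indicator measurableSet_Iic
  have hfactor : (fun ω => ENNReal.ofReal (observedBy X T s k ω - c))
      = (excess ∘ X k) * ((Iic s).indicator 1 ∘ arrival T k) := by
    ext ω
    by_cases hle : arrival T k ω ≤ s <;> simp [observedBy, excess, hle, hc]
  rw [hfactor, lintegral_mul_eq_lintegral_mul_lintegral_of_indepFun (hexcess.comp (h.measX k))
    (hindicator.comp (measurable_arrival h.measT k)) ((h.indepFun_X_arrival k).comp hexcess hindicator)]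
  simp only [Function.comp_apply]
  rw [← lintegral_map hexcess (h.measX k), h.identX k, lintegral_map hexcess (h.measX 0),
    ← lintegral_map hindicator (measurable_arrival h.measT k), lintegral_indicator_one measurableSet_Iic,
    Measure.map_apply (measurable_arrival h.measT k) measurableSet_Iic]
  rfl

lemma lintegral_ofReal_maxByT_sub_add_le (h : Setup μ X T) {c : ℝ} (hc : 0 ≤ c) (s : ℝ) :
    ∫⁻ ω, ENNReal.ofReal (maxByT X T s ω - c) ∂μ
        + ∫⁻ ω, min (ENNReal.ofReal (observedBy X T s 0 ω - c))
          (ENNReal.ofReal (observedBy X T s 1 ω - c)) ∂μ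
      ≤ (∫⁻ ω, ENNReal.ofReal (X 0 ω - c) ∂μ) * ENNReal.ofReal s := by
  have := h.prob
  have hobs := measurable_observedBy h.measX h.measT s
  rw [← lintegral_add_left ((measurable_maxByT h.measX h.measT s).sub_const c).ennreal_ofReal]
  calc _ ≤ ∫⁻ ω, ∑' k, ENNReal.ofReal (observedBy X T s k ω - c) ∂μ :=
        lintegral_mono fun ω => ofReal_iSup_sub_add_min_le_tsum hc zero_ne_one
    _ = ∑' k, (∫⁻ ω, ENNReal.ofReal (X 0 ω - c) ∂μ) * μ {ω | arrival T k ω ≤ s} := by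
        rw [lintegral_tsum fun k => ((hobs k).sub_const c).ennreal_ofReal.aemeasurable]
        exact tsum_congr (h.lintegral_ofReal_observedBy_sub hc s)
    _ = _ := by rw [ENNReal.tsum_mul_left, tsum_measure_arrival_le h.iIndepFun_T h.measT h.expT]

lemma measure_two_early_large_ne_zero (h : Setup μ X T) {c t : ℝ} (ht : 0 < t)
    (hpos : μ {ω | c < X 0 ω} ≠ 0) :
    μ {ω | (c < X 0 ω ∧ c < X 1 ω) ∧ T 0 ω ≤ t ∧ T 1 ω ≤ t} ≠ 0 := by
  have hne := iIndepFun.measure_biInter_preimage_ne_zero h.indep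
    {Sum.inl 0, Sum.inl 1, Sum.inr 0, Sum.inr 1}
    (sets := Sum.elim (fun _ => Ioi c) (fun _ => Iic t))
    (by rintro (i | i) - <;> simp [measurableSet_Ioi, measurableSet_Iic]) ?_
  · convert hne using 2
    ext ω
    simp [and_assoc]
  rintro (i | i) -
  · rw [Sum.elim_inl, Sum.elim_inl, ← Measure.map_apply (h.measX i) measurableSet_Ioi, h.identX i,
      Measure.map_apply (h.measX 0) measurableSet_Ioi]
    exact hpos
  · rw [Sum.elim_inr, Sum.elim_inr, ← Measure.map_apply (h.measT i) measurableSet_Iic, h.expT i]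
    exact expMeasure_Iic_ne_zero one_pos ht

lemma lintegral_min_observedBy_sub_pos (h : Setup μ X T) {s c : ℝ} (hs : 0 < s)
    (hpos : 0 < μ {ω | c < X 0 ω}) :
    0 < ∫⁻ ω, min (ENNReal.ofReal (observedBy X T s 0 ω - c))
      (ENNReal.ofReal (observedBy X T s 1 ω - c)) ∂μ := by
  have hobs := measurable_observedBy h.measX h.measT s
  rw [lintegral_pos_iff_support (by fun_prop)]
  refine (h.measure_two_early_large_ne_zero (half_pos hs) hpos.ne').bot_lt.trans_le
    (measure_mono ?_)
  rintro ω ⟨⟨hX0, hX1⟩, hT0, hT1⟩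
  have harr0 : arrival T 0 ω ≤ s := by
    simp only [arrival, zero_add, Finset.sum_range_one]
    linarith
  have harr1 : arrival T 1 ω ≤ s := by
    simp only [arrival, Finset.sum_range_succ, Finset.sum_range_zero, zero_add]
    linarith
  simp [observedBy, harr0, harr1, hX0, hX1]

end Setup

end ProphetPoisson

open ProphetPoisson in
theorem expected_max_pos_part_le_general
    {Ω : Type*} [MeasurableSpace Ω] (μ : Measure Ω) (X T : ℕ → Ω → ℝ)
    (hsetup : Setup μ X T)
    (hXint : Integrable (X 0) μ)
    (s : ℝ) (hs : 0 < s) (c : ℝ) (hc : 0 ≤ c) :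
    (∫ ω, max (maxByT X T s ω - c) 0 ∂μ) ≤ s * ∫ ω, max (X 0 ω - c) 0 ∂μ ∧
      (0 < μ {ω | c < X 0 ω} →
        (∫ ω, max (maxByT X T s ω - c) 0 ∂μ) < s * ∫ ω, max (X 0 ω - c) 0 ∂μ) := by
  have := hsetup.prob
  have hsum := hsetup.lintegral_ofReal_maxByT_sub_add_le hc s
  set J := ∫⁻ ω, ENNReal.ofReal (X 0 ω - c) ∂μ
  have hK : J * ENNReal.ofReal s ≠ ⊤ :=
    ENNReal.mul_ne_top (hXint.sub (integrable_const c)).lintegral_lt_top.ne ENNReal.ofReal_ne_top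
  have hIK := le_self_add.trans hsum
  rw [integral_max_sub_zero_eq_toReal (measurable_maxByT hsetup.measX hsetup.measT s).aemeasurable,
    integral_max_sub_zero_eq_toReal (hsetup.measX 0).aemeasurable,
    show s * J.toReal = (J * ENNReal.ofReal s).toReal by
      rw [ENNReal.toReal_mul, ENNReal.toReal_ofReal hs.le, mul_comm]]
  refine ⟨ENNReal.toReal_mono hK hIK, fun hpos => ENNReal.toReal_strict_mono hK ?_⟩
  exact (ENNReal.lt_add_right (ne_top_of_le_ne_top hK hIK)
    (hsetup.lintegral_min_observedBy_sub_pos hs hpos).ne').trans_le hsum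

open ProphetPoisson in
/-- Lemma `simple-bound`: for `s > 0` and `c ≥ 0`,
`E[(X_s* − c)⁺] ≤ s·E[(X − c)⁺]`, with strict inequality if `P(X > c) > 0`. -/
theorem expected_max_pos_part_le
    {Ω : Type*} [MeasurableSpace Ω] (μ : Measure Ω) (X T : ℕ → Ω → ℝ)
    (hsetup : Setup μ X T)
    (hXnn : ∀ i ω, 0 ≤ X i ω) (hXint : Integrable (X 0) μ)
    (hXne : μ {ω | X 0 ω = 0} < 1)
    (s : ℝ) (hs : 0 < s) (c : ℝ) (hc : 0 ≤ c) :
    (∫ ω, max (maxByT X T s ω - c) 0 ∂μ) ≤ s * ∫ ω, max (X 0 ω - c) 0 ∂μ ∧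
      (0 < μ {ω | c < X 0 ω} →
        (∫ ω, max (maxByT X T s ω - c) 0 ∂μ) < s * ∫ ω, max (X 0 ω - c) 0 ∂μ) :=
  expected_max_pos_part_le_general μ X T hsetup hXint s hs c hc
end
end

section
/- For every γ > 0, the function f(x) := (1 − e^{−x})(1 + γ/x), defined for x > 0, has no local minimum on (0, ∞); that is, there is no point x₀ > 0 and no neighborhood (x₀ − δ, x₀ + δ) ⊆ (0,∞) on which f attains its minimum at x₀. -/
/-!
Multiplying `f'(x)` by `x² eˣ > 0` gives `h(x) = x² + γx + γ - γeˣ`, so `f'` has the sign of `h`.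
Now `h(0) = h'(0) = 0` and `h'(x) = 2x + γ - γeˣ` is strictly concave, so `h'` changes sign at most
once on `(0, ∞)`, from positive to negative; hence once `h(a) ≤ 0` for some `a > 0`, `h < 0` on
`(a, ∞)`. A local minimum `x₀` would need `h(x₀) = 0` and, by the mean value theorem, a point of
`(0, x₀)` where `h ≤ 0`.
-/

open Real Set

theorem StrictConcaveOn.pos_of_lt_of_nonneg {𝕜 : Type*} [Field 𝕜] [LinearOrder 𝕜]
    [IsStrictOrderedRing 𝕜] {φ : 𝕜 → 𝕜} (hφ : StrictConcaveOn 𝕜 (Ici 0) φ) (hφ0 : φ 0 = 0)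
    {a b : 𝕜} (ha : 0 < a) (hab : a < b) (hb : 0 ≤ φ b) : 0 < φ a := by
  have hslope := hφ.secant_strict_mono self_mem_Ici ha.le (ha.trans hab).le ha.ne'
    (ha.trans hab).ne' hab
  simp only [hφ0, sub_zero] at hslope
  exact (div_pos_iff_of_pos_right ha).1 ((div_nonneg hb (ha.trans hab).le).trans_lt hslope)

theorem exists_mem_Ioo_hasDerivAt_nonpos {f f' : ℝ → ℝ} {a b : ℝ} (hab : a < b)
    (hf : ∀ x ∈ Icc a b, HasDerivAt f (f' x) x) (hfab : f b ≤ f a) : ∃ c ∈ Ioo a b, f' c ≤ 0 := by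
  obtain ⟨c, hc, hslope⟩ := exists_hasDerivAt_eq_slope f f' hab
    (fun x hx => (hf x hx).continuousAt.continuousWithinAt)
    (fun x hx => hf x (Ioo_subset_Icc_self hx))
  exact ⟨c, hc, hslope ▸ div_nonpos_of_nonpos_of_nonneg (by linarith) (by linarith)⟩

theorem neg_of_nonpos_of_strictConcaveOn_deriv {g g' : ℝ → ℝ}
    (hg : ∀ x, HasDerivAt g (g' x) x) (hg0 : g 0 = 0) (hg'0 : g' 0 = 0)
    (hg' : StrictConcaveOn ℝ (Ici 0) g') {a b : ℝ} (ha : 0 < a) (hab : a < b) (hga : g a ≤ 0) :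
    g b < 0 := by
  by_contra! hgb
  obtain ⟨c₁, ⟨hc₁, hc₁a⟩, hgc₁⟩ :=
    exists_mem_Ioo_hasDerivAt_nonpos ha (fun x _ => hg x) (hga.trans hg0.ge)
  obtain ⟨c₂, ⟨hac₂, -⟩, hgc₂⟩ :=
    exists_mem_Ioo_hasDerivAt_nonpos hab (fun x _ => (hg x).neg) (neg_le_neg (hga.trans hgb))
  exact hgc₁.not_gt (hg'.pos_of_lt_of_nonneg hg'0 hc₁ (hc₁a.trans hac₂) (neg_nonpos.1 hgc₂))

theorem hasDerivAt_sq_add_mul_add_sub_mul_exp (γ x : ℝ) :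
    HasDerivAt (fun x => x ^ 2 + γ * x + γ - γ * exp x) (2 * x + γ - γ * exp x) x := by
  simpa using (((hasDerivAt_pow 2 x).add ((hasDerivAt_id x).const_mul γ)).add_const γ).fun_sub
    ((hasDerivAt_exp x).const_mul γ)

theorem strictConcaveOn_two_mul_add_sub_mul_exp {γ : ℝ} (hγ : 0 < γ) :
    StrictConcaveOn ℝ univ (fun x => 2 * x + γ - γ * exp x) := by
  refine ⟨convex_univ, fun x _ y _ hxy a b ha hb hab => ?_⟩
  have hexp := strictConvexOn_exp.2 (mem_univ x) (mem_univ y) hxy ha hb hab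
  simp only [smul_eq_mul] at hexp ⊢
  nlinarith [mul_lt_mul_of_pos_left hexp hγ]

theorem hasDerivAt_one_sub_exp_neg_mul_one_add_div (γ : ℝ) {x : ℝ} (hx : x ≠ 0) :
    HasDerivAt (fun x => (1 - exp (-x)) * (1 + γ / x))
      ((x ^ 2 + γ * x + γ - γ * exp x) / (x ^ 2 * exp x)) x := by
  have h₁ : HasDerivAt (fun x => 1 - exp (-x)) (exp (-x)) x := by
    simpa using ((hasDerivAt_neg x).exp).const_sub 1
  have h₂ : HasDerivAt (fun x => 1 + γ / x) (-(γ / x ^ 2)) x := by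
    simpa [div_eq_mul_inv] using ((hasDerivAt_inv hx).const_mul γ).const_add 1
  refine (h₁.mul h₂).congr_deriv ?_
  rw [exp_neg]
  field_simp
  ring

/-- Lemma `calculus`: for `γ > 0`, the function
`f(x) = (1 − e^{−x})(1 + γ/x)` has no local minimum on `(0, ∞)`. -/
theorem no_local_min_one_sub_exp_mul_one_add_div (γ : ℝ) (hγ : 0 < γ) :
    ¬ ∃ x₀ δ : ℝ, 0 < x₀ ∧ 0 < δ ∧
      Set.Ioo (x₀ - δ) (x₀ + δ) ⊆ Set.Ioi (0 : ℝ) ∧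
      ∀ x ∈ Set.Ioo (x₀ - δ) (x₀ + δ),
        (1 - Real.exp (-x₀)) * (1 + γ / x₀) ≤ (1 - Real.exp (-x)) * (1 + γ / x) := by
  rintro ⟨x₀, δ, hx₀, hδ, -, hmin⟩
  set f := fun x : ℝ => (1 - exp (-x)) * (1 + γ / x)
  set h := fun x : ℝ => x ^ 2 + γ * x + γ - γ * exp x
  have hf : ∀ x, 0 < x → HasDerivAt f (h x / (x ^ 2 * exp x)) x := fun x hx =>
    hasDerivAt_one_sub_exp_neg_mul_one_add_div γ hx.ne'
  have hhx₀ : h x₀ = 0 := by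
    have hloc : IsLocalMin f x₀ :=
      Filter.eventually_of_mem (Ioo_mem_nhds (by linarith) (by linarith)) hmin
    simpa [hx₀.ne', (exp_pos x₀).ne'] using hloc.hasDerivAt_eq_zero (hf x₀ hx₀)
  set x₁ := max (x₀ - δ / 2) (x₀ / 2)
  have hx₁ : 0 < x₁ := lt_max_of_lt_right (by linarith)
  have hx₁x₀ : x₁ < x₀ := max_lt (by linarith) (by linarith)
  have hfx₁ : f x₀ ≤ f x₁ :=
    hmin x₁ ⟨(by linarith : x₀ - δ < x₀ - δ / 2).trans_le (le_max_left _ _), by linarith⟩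
  obtain ⟨c, ⟨hx₁c, hcx₀⟩, hfc⟩ :=
    exists_mem_Ioo_hasDerivAt_nonpos hx₁x₀ (fun x hx => hf x (hx₁.trans_le hx.1)) hfx₁
  have hc₀ : 0 < c := hx₁.trans hx₁c
  have hhc : h c ≤ 0 := by simpa using (div_le_iff₀ (by positivity)).1 hfc
  have hh' := (strictConcaveOn_two_mul_add_sub_mul_exp hγ).subset (subset_univ _) (convex_Ici 0)
  exact (neg_of_nonpos_of_strictConcaveOn_deriv (hasDerivAt_sq_add_mul_add_sub_mul_exp γ)
    (by simp) (by simp) hh' hc₀ hcx₀ hhc).ne hhx₀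
end

section
/- For every t > 0, α > 0, and p ∈ (0, 1], one has (1 − e^{−tp})(1 + α/p) ≥ min{ tα, (1 − e^{−t})(1 + α) }. -/
/-!
With `u = t p ∈ (0, t]`, `a = 1 - e^{-u}` and `b = 1 - e^{-t}`, the right-hand side is the affine
function `a + α t a / u` of `α`, and the minimum is that of `t α` and `b + b α`. The affine function
dominates `t α` up to the root of `a + α t a / u = t α` and has slope `t a / u ≥ b` by concavity of
`1 - e^{-s}`; it therefore dominates `b + b α` from that root on exactly when
`1/a - 1/u ≤ 1/b - 1/t`, i.e. when `s ↦ 1/(1 - e^{-s}) - 1/s` is monotone. Its derivative is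
positive because `s e^{-s/2} < 1 - e^{-s}`, which is `s < 2 sinh (s/2)`.
-/

open Real Set

lemma one_sub_exp_neg_pos {s : ℝ} (hs : 0 < s) : 0 < 1 - exp (-s) :=
  sub_pos.2 (exp_lt_one_iff.2 (neg_lt_zero.2 hs))

lemma one_sub_exp_neg_lt_self {s : ℝ} (hs : s ≠ 0) : 1 - exp (-s) < s := by
  linarith [one_sub_lt_exp_neg hs]

lemma antitoneOn_one_sub_exp_neg_div : AntitoneOn (fun s : ℝ => (1 - exp (-s)) / s) (Ioi 0) := by
  intro x hx y hy hxy
  have hconv : ConvexOn ℝ univ (fun s : ℝ => exp (-s)) :=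
    convexOn_exp.comp_linearMap (-LinearMap.id)
  have hsec := hconv.secant_mono (mem_univ 0) (mem_univ x) (mem_univ y) hx.out.ne' hy.out.ne' hxy
  simp only [neg_zero, exp_zero, sub_zero] at hsec
  have hsec' := neg_le_neg hsec
  rwa [← neg_div, ← neg_div, neg_sub, neg_sub] at hsec'

lemma sq_mul_exp_neg_lt_one_sub_exp_neg_sq {s : ℝ} (hs : 0 < s) :
    s ^ 2 * exp (-s) < (1 - exp (-s)) ^ 2 := by
  have hsinh : s < 2 * sinh (s / 2) := by linarith [self_lt_sinh_iff.2 (half_pos hs)]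
  have hhalf : exp (-(s / 2)) ^ 2 = exp (-s) := by rw [← exp_nat_mul]; ring_nf
  have hinv : exp (s / 2) * exp (-(s / 2)) = 1 := by rw [← exp_add]; simp
  have hfactor : 1 - exp (-s) = 2 * sinh (s / 2) * exp (-(s / 2)) := by
    rw [sinh_eq, ← hhalf]
    linear_combination -hinv
  calc s ^ 2 * exp (-s) = (s * exp (-(s / 2))) ^ 2 := by rw [mul_pow, hhalf]
    _ < (2 * sinh (s / 2) * exp (-(s / 2))) ^ 2 := by gcongr
    _ = (1 - exp (-s)) ^ 2 := by rw [hfactor]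

lemma strictMonoOn_inv_one_sub_exp_neg_sub_inv :
    StrictMonoOn (fun s : ℝ => (1 - exp (-s))⁻¹ - s⁻¹) (Ioi 0) := by
  have hderiv : ∀ x ∈ Ioi (0 : ℝ), HasDerivAt (fun s => (1 - exp (-s))⁻¹ - s⁻¹)
      (-exp (-x) / (1 - exp (-x)) ^ 2 - -(x ^ 2)⁻¹) x := by
    intro x hx
    have h : HasDerivAt (fun s => 1 - exp (-s)) (exp (-x)) x := by
      simpa using ((hasDerivAt_neg x).exp).const_sub 1
    exact (h.inv (one_sub_exp_neg_pos hx).ne').sub (hasDerivAt_inv hx.out.ne')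
  refine strictMonoOn_of_deriv_pos (convex_Ioi 0)
    (fun x hx => (hderiv x hx).continuousAt.continuousWithinAt) fun x hx => ?_
  rw [interior_Ioi] at hx
  have hlt : exp (-x) / (1 - exp (-x)) ^ 2 < (x ^ 2)⁻¹ := by
    have := one_sub_exp_neg_pos hx
    rw [div_lt_iff₀ (pow_pos this 2), inv_mul_eq_div, lt_div_iff₀ (pow_pos hx 2)]
    linarith [sq_mul_exp_neg_lt_one_sub_exp_neg_sq hx]
  rw [(hderiv x hx).deriv, neg_div]
  linarith

lemma min_le_mul_one_add_div {t p a b α : ℝ} (hp : 0 < p) (ha : 0 < a) (hb : 0 < b)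
    (hatp : a < t * p) (hslope : b / t ≤ a / (t * p))
    (hcross : a⁻¹ - (t * p)⁻¹ ≤ b⁻¹ - t⁻¹) :
    min (t * α) (b * (1 + α)) ≤ a * (1 + α / p) := by
  have htp : 0 < t * p := ha.trans hatp
  have ht : 0 < t := pos_of_mul_pos_left htp hp.le
  rw [div_le_div_iff₀ ht htp] at hslope
  rw [inv_sub_inv ha.ne' htp.ne', inv_sub_inv hb.ne' ht.ne',
    div_le_div_iff₀ (mul_pos ha htp) (mul_pos hb ht)] at hcross
  have hslope' : p * b ≤ a := by nlinarith
  have hcross' : (t * p - a) * b ≤ (t - b) * a * p := by nlinarith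
  rw [one_add_div hp.ne', mul_div_assoc']
  rcases le_or_gt (t * α) (a * (p + α) / p) with h | h
  · exact min_le_of_left_le h
  refine min_le_of_right_le ?_
  rw [div_lt_iff₀ hp] at h
  have hkey : p * (b - a) * (t * p - a) ≤ α * (a - p * b) * (t * p - a) := by
    calc p * (b - a) * (t * p - a) ≤ a * p * (a - p * b) := by nlinarith
      _ ≤ α * (t * p - a) * (a - p * b) :=
        mul_le_mul_of_nonneg_right (by linarith) (sub_nonneg.2 hslope')
      _ = α * (a - p * b) * (t * p - a) := by ring
  have hgap := le_of_mul_le_mul_right hkey (by linarith)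
  rw [le_div_iff₀ hp]
  linarith

theorem one_sub_exp_mul_one_add_div_ge_min_general
    (t α p : ℝ) (ht : 0 < t) (hp0 : 0 < p) (hp1 : p ≤ 1) :
    min (t * α) ((1 - Real.exp (-t)) * (1 + α)) ≤
      (1 - Real.exp (-(t * p))) * (1 + α / p) := by
  have htp : 0 < t * p := mul_pos ht hp0
  have htp_le : t * p ≤ t := mul_le_of_le_one_right ht.le hp1
  exact min_le_mul_one_add_div hp0 (one_sub_exp_neg_pos htp) (one_sub_exp_neg_pos ht)
    (one_sub_exp_neg_lt_self htp.ne') (antitoneOn_one_sub_exp_neg_div htp ht htp_le)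
    (strictMonoOn_inv_one_sub_exp_neg_sub_inv.monotoneOn htp ht htp_le)

/-- for `t > 0`, `α > 0`, `p ∈ (0,1]`,
`(1 − e^{−tp})(1 + α/p) ≥ min { tα, (1 − e^{−t})(1 + α) }`. -/
theorem one_sub_exp_mul_one_add_div_ge_min
    (t α p : ℝ) (ht : 0 < t) (hα : 0 < α) (hp0 : 0 < p) (hp1 : p ≤ 1) :
    min (t * α) ((1 - Real.exp (-t)) * (1 + α)) ≤
      (1 - Real.exp (-(t * p))) * (1 + α / p) :=
  one_sub_exp_mul_one_add_div_ge_min_general t α p ht hp0 hp1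
end

section
/- Let γ(t) := t/(1 − e^{−t}) and β(t) := 1 − (1 + log γ(t))/γ(t). Define f̂(t) := β(t)(1 − e^{−t})/(β(t) + 1 − e^{−t}) and ĝ(t) := (1/2)·[(1 + e^{−t})(1 − exp(−t/(e^t + 1))) − e^{−t}(1 − e^{−t})] for t > 0. Then f̂(t) − ĝ(t) = O(t³) as t ↓ 0; that is, there exist constants C > 0 and δ > 0 such that |f̂(t) − ĝ(t)| ≤ C·t³ for all 0 < t < δ. -/
/-! Both `f̂` and `ĝ` are `t²/8 + O(t³)`. For `f̂`, with `ω = 1 - e⁻ᵗ`, one gets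
`γ = t/ω = 1 + t/2 + t²/12 + O(t³)`, hence `log γ = t/2 - t²/24 + O(t³)` and
`β = (γ - 1 - log γ)/γ = t²/8 + O(t³)`; then `f̂ - β = -β²/(β + ω)` is `O(t³)` because
`β + ω ~ t`. For `ĝ`, `u = t/(eᵗ + 1) = t/2 - t²/4 + O(t³)` gives
`1 - e⁻ᵘ = t/2 - 3t²/8 + O(t³)`, and expanding the products leaves `t²/8 + O(t³)`. -/

noncomputable section

namespace ProphetPoisson

/-- `γ(t) = t/(1 − e^{−t})`. -/
def gammaT (t : ℝ) : ℝ := t / (1 - Real.exp (-t))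

/-- `β(t) = 1 − (1 + log γ(t))/γ(t)`. -/
def betaT (t : ℝ) : ℝ := 1 - (1 + Real.log (gammaT t)) / gammaT t

/-- `f̂(t) = β(t)(1 − e^{−t})/(β(t) + 1 − e^{−t})`. -/
def fHat (t : ℝ) : ℝ := betaT t * (1 - Real.exp (-t)) / (betaT t + 1 - Real.exp (-t))

/-- `ĝ(t) = (1/2)[(1 + e^{−t})(1 − exp(−t/(eᵗ + 1))) − e^{−t}(1 − e^{−t})]`. -/
def gHat (t : ℝ) : ℝ :=
  (1 / 2) * ((1 + Real.exp (-t)) * (1 - Real.exp (-(t / (Real.exp t + 1)))) -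
    Real.exp (-t) * (1 - Real.exp (-t)))

end ProphetPoisson

open Real Filter Topology Asymptotics

namespace Asymptotics

variable {α 𝕜 : Type*} [NormedField 𝕜] {l : Filter α}

theorem IsBigO.mul_sub_mul {f₁ f₂ p₁ p₂ : α → 𝕜} {h : α → ℝ}
    (h₁ : (fun x => f₁ x - p₁ x) =O[l] h) (h₂ : (fun x => f₂ x - p₂ x) =O[l] h)
    (hf₁ : f₁ =O[l] (fun _ => (1 : ℝ))) (hp₂ : p₂ =O[l] (fun _ => (1 : ℝ))) :
    (fun x => f₁ x * f₂ x - p₁ x * p₂ x) =O[l] h :=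
  ((h₂.mul hf₁).add (h₁.mul hp₂)).congr (fun x => by ring) (fun x => mul_one _)

theorem IsBigO.sub_sq_half_sub {y q : α → 𝕜} {h : α → ℝ}
    (hyq : (fun x => y x - q x) =O[l] h) (hy : Tendsto y l (𝓝 0)) (hq : Tendsto q l (𝓝 0)) :
    (fun x => (y x - y x ^ 2 / 2) - (q x - q x ^ 2 / 2)) =O[l] h := by
  have hk : (fun x => 1 - (y x + q x) / 2) =O[l] (fun _ => (1 : ℝ)) :=
    (tendsto_const_nhds.sub ((hy.add hq).div_const 2)).isBigO_one ℝ
  exact (hyq.mul hk).congr (fun x => by ring) (fun x => mul_one _)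

theorem pow_mul_isBigO_pow (n : ℕ) {c : 𝕜 → 𝕜} (hc : ContinuousAt c 0) :
    (fun t => t ^ n * c t) =O[𝓝 0] (· ^ n) :=
  ((isBigO_refl (· ^ n) _).mul (hc.tendsto.isBigO_one 𝕜)).congr_right (fun _ => mul_one _)

theorem IsBigO.div_of_isEquivalent_id {l : Filter 𝕜} {f g : 𝕜 → 𝕜} {n : ℕ}
    (hf : f =O[l] (· ^ (n + 1))) (hg : g ~[l] fun t => t) :
    (fun t => f t / g t) =O[l] (· ^ n) := by
  refine ((hf.mul hg.inv.isBigO).trans (isBigO_of_le _ fun t => ?_)).congr_left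
    fun t => (div_eq_mul_inv _ _).symm
  rcases eq_or_ne t 0 with rfl | ht
  · simp
  · simp [pow_succ, ht]

theorem isEquivalent_id_of_sub_isBigO_sq {l : Filter 𝕜} (hl : l ≤ 𝓝 0) {g : 𝕜 → 𝕜}
    (hg : (fun t => g t - t) =O[l] (· ^ 2)) : g ~[l] fun t => t :=
  hg.trans_isLittleO (((isLittleO_pow_pow one_lt_two).mono hl).congr_right fun t => pow_one t)

theorem IsEquivalent.eventually_ne_zero_of_id {g : 𝕜 → 𝕜} (hg : g ~[𝓝[≠] 0] fun t => t) :
    ∀ᶠ t in 𝓝[≠] 0, g t ≠ 0 := by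
  filter_upwards [hg.isBigO_symm.eq_zero_imp, self_mem_nhdsWithin] with t h ht
  exact fun h0 => ht (h h0)

end Asymptotics

namespace Real

theorem log_one_add_sub_isBigO_cube :
    (fun y => log (1 + y) - (y - y ^ 2 / 2)) =O[𝓝 0] (· ^ 3) := by
  refine .of_bound 2 ?_
  filter_upwards [Metric.ball_mem_nhds (0 : ℝ) one_half_pos] with y hy
  rw [Metric.mem_ball, dist_zero_right, norm_eq_abs] at hy
  have h := abs_log_sub_add_sum_range_le (x := -y) (by rw [abs_neg]; linarith) 2
  simp only [Finset.sum_range_succ, Finset.sum_range_zero, abs_neg, sub_neg_eq_add] at h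
  calc ‖log (1 + y) - (y - y ^ 2 / 2)‖ ≤ |y| ^ 3 / (1 - |y|) := by
        rw [norm_eq_abs]; convert h using 2; push_cast; ring
    _ ≤ 2 * ‖y ^ 3‖ := by
        rw [norm_pow, norm_eq_abs, div_le_iff₀ (by linarith)]
        nlinarith [pow_nonneg (abs_nonneg y) 3]

theorem exp_neg_sub_sum_range_isBigO_pow (n : ℕ) :
    (fun t => exp (-t) - ∑ i ∈ Finset.range n, (-t) ^ i / i.factorial) =O[𝓝 0] (· ^ n) :=
  ((exp_sub_sum_range_isBigO_pow n).comp_tendsto (continuous_neg.tendsto' 0 0 neg_zero)).trans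
    (isBigO_of_le _ fun t => by simp [norm_pow])

end Real

namespace ProphetPoisson

theorem one_sub_exp_neg_sub_self_isBigO :
    (fun t => (1 - exp (-t)) - t) =O[𝓝 0] (· ^ 2) :=
  (exp_neg_sub_sum_range_isBigO_pow 2).neg_left.congr_left fun t => by
    simp [Finset.sum_range_succ]; ring

theorem one_sub_exp_neg_sub_isBigO :
    (fun t => (1 - exp (-t)) - (t - t ^ 2 / 2 + t ^ 3 / 6)) =O[𝓝 0] (· ^ 4) :=
  (exp_neg_sub_sum_range_isBigO_pow 4).neg_left.congr_left fun t => by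
    simp [Finset.sum_range_succ, Nat.factorial]; ring

theorem gammaT_sub_isBigO :
    (fun t => gammaT t - (1 + t / 2 + t ^ 2 / 12)) =O[𝓝[≠] 0] (· ^ 3) := by
  have hP : (fun t : ℝ => 1 + t / 2 + t ^ 2 / 12) =O[𝓝 0] (fun _ => (1 : ℝ)) :=
    ((by fun_prop : Continuous fun t : ℝ => 1 + t / 2 + t ^ 2 / 12).tendsto 0).isBigO_one ℝ
  have hnum : (fun t => t - (1 + t / 2 + t ^ 2 / 12) * (1 - exp (-t))) =O[𝓝 0] (· ^ 4) :=
    (((hP.mul one_sub_exp_neg_sub_isBigO).congr_right fun _ => one_mul _).neg_left.add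
      (pow_mul_isBigO_pow 4 (c := fun t : ℝ => -(1 / 24) - t / 72) (by fun_prop))).congr_left
      fun t => by ring
  have hω : (fun t => 1 - exp (-t)) ~[𝓝[≠] 0] fun t => t :=
    isEquivalent_id_of_sub_isBigO_sq nhdsWithin_le_nhds
      (one_sub_exp_neg_sub_self_isBigO.mono nhdsWithin_le_nhds)
  refine ((hnum.mono nhdsWithin_le_nhds).div_of_isEquivalent_id hω).congr' ?_ .rfl
  filter_upwards [hω.eventually_ne_zero_of_id] with t ht
  rw [gammaT, div_sub' ht]
  ring

theorem tendsto_gammaT : Tendsto gammaT (𝓝[≠] 0) (𝓝 1) := by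
  have hP : Tendsto (fun t : ℝ => 1 + t / 2 + t ^ 2 / 12) (𝓝[≠] 0) (𝓝 1) :=
    ((by fun_prop : Continuous fun t : ℝ => 1 + t / 2 + t ^ 2 / 12).tendsto' 0 1
      (by norm_num)).mono_left nhdsWithin_le_nhds
  have hcube : Tendsto (fun t : ℝ => t ^ 3) (𝓝[≠] 0) (𝓝 0) :=
    ((continuous_pow 3).tendsto' 0 0 (by norm_num)).mono_left nhdsWithin_le_nhds
  simpa using (gammaT_sub_isBigO.trans_tendsto hcube).add hP

theorem log_gammaT_sub_isBigO :
    (fun t => log (gammaT t) - (t / 2 - t ^ 2 / 24)) =O[𝓝[≠] 0] (· ^ 3) := by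
  have hy : Tendsto (fun t => gammaT t - 1) (𝓝[≠] 0) (𝓝 0) := by
    simpa using tendsto_gammaT.sub_const 1
  have hQ : Tendsto (fun t : ℝ => t / 2 + t ^ 2 / 12) (𝓝[≠] 0) (𝓝 0) :=
    ((by fun_prop : Continuous fun t : ℝ => t / 2 + t ^ 2 / 12).tendsto' 0 0
      (by norm_num)).mono_left nhdsWithin_le_nhds
  have hyQ : (fun t => (gammaT t - 1) - (t / 2 + t ^ 2 / 12)) =O[𝓝[≠] 0] (· ^ 3) :=
    gammaT_sub_isBigO.congr_left fun t => by ring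
  have hy1 : (fun t => gammaT t - 1) =O[𝓝[≠] 0] (fun t => t) := by
    have hcube : (fun t : ℝ => t ^ 3) =O[𝓝[≠] 0] (· ^ 1) :=
      (isLittleO_pow_pow (by norm_num)).isBigO.mono nhdsWithin_le_nhds
    have hQ1 := pow_mul_isBigO_pow 1 (c := fun t : ℝ => 1 / 2 + t / 12) (by fun_prop)
    exact ((hyQ.trans hcube).add (hQ1.mono nhdsWithin_le_nhds)).congr (fun t => by ring) pow_one
  have hlog := (log_one_add_sub_isBigO_cube.comp_tendsto hy).trans (hy1.pow 3)
  have htail := pow_mul_isBigO_pow 3 (c := fun t : ℝ => -(1 / 24) - t / 288) (by fun_prop)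
  refine ((hlog.add (hyQ.sub_sq_half_sub hy hQ)).add
    (htail.mono nhdsWithin_le_nhds)).congr_left fun t => ?_
  simp only [Function.comp_apply, add_sub_cancel]
  ring

theorem betaT_sub_isBigO : (fun t => betaT t - t ^ 2 / 8) =O[𝓝[≠] 0] (· ^ 3) := by
  have hc : (fun t : ℝ => 1 - t ^ 2 / 8) =O[𝓝[≠] 0] (fun _ => (1 : ℝ)) :=
    (((by fun_prop : Continuous fun t : ℝ => 1 - t ^ 2 / 8).tendsto 0).mono_left
      nhdsWithin_le_nhds).isBigO_one ℝ
  have htail := pow_mul_isBigO_pow 3 (c := fun t : ℝ => -(1 / 16) - t / 96) (by fun_prop)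
  have hnum : (fun t => (1 - t ^ 2 / 8) * gammaT t - 1 - log (gammaT t)) =O[𝓝[≠] 0] (· ^ 3) :=
    ((((hc.mul gammaT_sub_isBigO).congr_right fun _ => one_mul _).sub log_gammaT_sub_isBigO).add
      (htail.mono nhdsWithin_le_nhds)).congr_left fun t => by ring
  have hinv : (fun t => (gammaT t)⁻¹) =O[𝓝[≠] 0] (fun _ => (1 : ℝ)) :=
    (tendsto_gammaT.inv₀ one_ne_zero).isBigO_one ℝ
  refine ((hnum.mul hinv).congr_right fun _ => mul_one _).congr' ?_ .rfl
  filter_upwards [tendsto_gammaT.eventually_ne one_ne_zero] with t ht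
  rw [betaT]
  field_simp
  ring

theorem fHat_sub_isBigO : (fun t => fHat t - t ^ 2 / 8) =O[𝓝[≠] 0] (· ^ 3) := by
  have hβ : betaT =O[𝓝[≠] 0] (· ^ 2) :=
    ((betaT_sub_isBigO.trans ((isLittleO_pow_pow (by norm_num : 2 < 3)).isBigO.mono
      nhdsWithin_le_nhds)).add ((pow_mul_isBigO_pow 2 (c := fun _ : ℝ => 1 / 8)
      (by fun_prop)).mono nhdsWithin_le_nhds)).congr_left fun t => by ring
  have hD : (fun t => betaT t + (1 - exp (-t))) ~[𝓝[≠] 0] fun t => t :=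
    isEquivalent_id_of_sub_isBigO_sq nhdsWithin_le_nhds <|
      (hβ.add (one_sub_exp_neg_sub_self_isBigO.mono nhdsWithin_le_nhds)).congr_left
        fun t => by ring
  have hsq : (fun t => -betaT t ^ 2) =O[𝓝[≠] 0] (· ^ 4) :=
    (hβ.pow 2).neg_left.congr_right fun t => by ring
  refine ((hsq.div_of_isEquivalent_id hD).add betaT_sub_isBigO).congr' ?_ .rfl
  filter_upwards [hD.eventually_ne_zero_of_id] with t ht
  rw [fHat, add_sub_assoc]
  field_simp
  ring

theorem div_exp_add_one_sub_isBigO :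
    (fun t => t / (exp t + 1) - (t / 2 - t ^ 2 / 4)) =O[𝓝 0] (· ^ 3) := by
  have hR : (fun t : ℝ => t / 2 - t ^ 2 / 4) =O[𝓝 0] (fun _ => (1 : ℝ)) :=
    ((by fun_prop : Continuous fun t : ℝ => t / 2 - t ^ 2 / 4).tendsto 0).isBigO_one ℝ
  have hexp : (fun t => exp t - (1 + t + t ^ 2 / 2)) =O[𝓝 0] (· ^ 3) :=
    (exp_sub_sum_range_isBigO_pow 3).congr_left fun t => by simp [Finset.sum_range_succ]
  have hnum : (fun t => t - (t / 2 - t ^ 2 / 4) * (exp t + 1)) =O[𝓝 0] (· ^ 3) :=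
    (((hR.mul hexp).congr_right fun _ => one_mul _).neg_left.add
      (pow_mul_isBigO_pow 3 (c := fun t : ℝ => t / 8) (by fun_prop))).congr_left
      fun t => by ring
  have hinv : (fun t => (exp t + 1)⁻¹) =O[𝓝 0] (fun _ => (1 : ℝ)) :=
    (((continuous_exp.add continuous_const).tendsto 0).inv₀
      (by positivity : exp (0 : ℝ) + 1 ≠ 0)).isBigO_one ℝ
  refine ((hnum.mul hinv).congr_right fun _ => mul_one _).congr_left fun t => ?_
  field_simp

theorem one_sub_exp_neg_div_exp_add_one_sub_isBigO :
    (fun t => (1 - exp (-(t / (exp t + 1)))) - (t / 2 - 3 * t ^ 2 / 8)) =O[𝓝 0] (· ^ 3) := by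
  have hu1 : (fun t => t / (exp t + 1)) =O[𝓝 0] (fun t => t) :=
    isBigO_of_le _ fun t => by
      rw [norm_div]
      refine div_le_self (norm_nonneg t) ?_
      rw [norm_of_nonneg (by positivity)]
      linarith [exp_pos t]
  have hu : Tendsto (fun t => t / (exp t + 1)) (𝓝 0) (𝓝 0) := hu1.trans_tendsto tendsto_id
  have hR : Tendsto (fun t : ℝ => t / 2 - t ^ 2 / 4) (𝓝 0) (𝓝 0) :=
    (by fun_prop : Continuous fun t : ℝ => t / 2 - t ^ 2 / 4).tendsto' 0 0 (by norm_num)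
  have hexp := ((exp_neg_sub_sum_range_isBigO_pow 3).comp_tendsto hu).trans (hu1.pow 3)
  have htail := pow_mul_isBigO_pow 3 (c := fun t : ℝ => 1 / 8 - t / 32) (by fun_prop)
  refine ((hexp.neg_left.add (div_exp_add_one_sub_isBigO.sub_sq_half_sub hu hR)).add
    htail).congr_left fun t => ?_
  simp [Finset.sum_range_succ]
  ring

theorem gHat_sub_isBigO : (fun t => gHat t - t ^ 2 / 8) =O[𝓝 0] (· ^ 3) := by
  have hs : (fun t => exp (-t) - (1 - t + t ^ 2 / 2)) =O[𝓝 0] (· ^ 3) :=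
    (exp_neg_sub_sum_range_isBigO_pow 3).congr_left fun t => by
      simp [Finset.sum_range_succ]; ring
  have hA := IsBigO.mul_sub_mul (f₁ := fun t => 1 + exp (-t))
    (p₁ := fun t => 1 + (1 - t + t ^ 2 / 2)) (hs.congr_left fun t => by ring)
    one_sub_exp_neg_div_exp_add_one_sub_isBigO
    (((by fun_prop : Continuous fun t => 1 + exp (-t)).tendsto 0).isBigO_one ℝ)
    (((by fun_prop : Continuous fun t : ℝ => t / 2 - 3 * t ^ 2 / 8).tendsto 0).isBigO_one ℝ)
  have hB := IsBigO.mul_sub_mul (f₁ := fun t => exp (-t)) (f₂ := fun t => 1 - exp (-t))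
    (p₂ := fun t => 1 - (1 - t + t ^ 2 / 2)) hs (hs.neg_left.congr_left fun t => by ring)
    (((by fun_prop : Continuous fun t => exp (-t)).tendsto 0).isBigO_one ℝ)
    (((by fun_prop : Continuous fun t : ℝ => 1 - (1 - t + t ^ 2 / 2)).tendsto 0).isBigO_one ℝ)
  have htail := pow_mul_isBigO_pow 3 (c := fun t : ℝ => -(3 / 16) + t / 32) (by fun_prop)
  exact (((hA.sub hB).const_mul_left (1 / 2)).add htail).congr_left fun t => by
    rw [gHat]; ring

theorem fHat_sub_gHat_isBigO : (fun t => fHat t - gHat t) =O[𝓝[≠] 0] (· ^ 3) :=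
  (fHat_sub_isBigO.sub (gHat_sub_isBigO.mono nhdsWithin_le_nhds)).congr_left fun t => by ring

end ProphetPoisson

open ProphetPoisson in
/-- `f̂(t) − ĝ(t) = O(t³)` as `t ↓ 0`. -/
theorem fHat_sub_gHat_isBigO_t_cube :
    ∃ C δ : ℝ, 0 < C ∧ 0 < δ ∧ ∀ t : ℝ, 0 < t → t < δ →
      |fHat t - gHat t| ≤ C * t ^ 3 := by
  obtain ⟨C, hC, hbound⟩ := fHat_sub_gHat_isBigO.exists_pos
  obtain ⟨δ, hδ, hball⟩ := Metric.eventually_nhds_iff.mp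
    (eventually_nhdsWithin_iff.mp hbound.bound)
  refine ⟨C, δ, hC, hδ, fun t ht htδ => ?_⟩
  have h := hball (by rwa [Real.dist_0_eq_abs, abs_of_pos ht]) ht.ne'
  rwa [norm_eq_abs, norm_pow, norm_eq_abs, abs_of_pos ht] at h
end
end
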